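/- arXiv:0805.4578 — 2 statements merged into one kernel-verified Lean document; each statement's English description precedes it below -/
import Mathlib

section
/- If P₁ and P₂ are two complete cd-structures on a category C, then the union P₁ ∪ P₂ is a complete cd-structure on C. -/
/-!
On a category whose initial object is strict, a cd-structure `P` is complete as soon as it is
nondegenerate (no distinguished square over a non-initial object has both sides initial) and
every pullback of a distinguished square to a non-initial object contains a simple covering:
the sieves which contain a simple covering after pullback to any non-initial object then form a
Grothendieck topology containing the generators of `t_P`, hence all of `t_P`. Completeness of
`P₁` forces the initial object to be strict, and both remaining conditions follow from
completeness and pass to unions, because simple coverings for `P₁` are simple coverings for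
`P₁ ∪ P₂`.
-/

open CategoryTheory CategoryTheory.Limits Opposite

universe v u
variable {C : Type u} [Category.{v} C]

/-- A commutative square in `C`, with corners `B`, `Y`, `A`, `X`. -/
structure CDSquare (C : Type u) [Category.{v} C] where
  B : C
  Y : C
  A : C
  X : C
  top : B ⟶ Y
  left : B ⟶ A
  p : Y ⟶ X
  e : A ⟶ X
  comm : top ≫ p = left ≫ e

/-- A morphism of squares. -/
structure CDSquareHom (Q' Q : CDSquare C) where
  hB : Q'.B ⟶ Q.B
  hY : Q'.Y ⟶ Q.Y
  hA : Q'.A ⟶ Q.A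
  hX : Q'.X ⟶ Q.X
  commTop : Q'.top ≫ hY = hB ≫ Q.top
  commLeft : Q'.left ≫ hA = hB ≫ Q.left
  commP : Q'.p ≫ hX = hY ≫ Q.p
  commE : Q'.e ≫ hX = hA ≫ Q.e

/-- Two squares are isomorphic if there is a morphism of squares which is an isomorphism
on each corner. -/
def CDSquare.Iso (Q' Q : CDSquare C) : Prop :=
  ∃ φ : CDSquareHom Q' Q, IsIso φ.hB ∧ IsIso φ.hY ∧ IsIso φ.hA ∧ IsIso φ.hX

/-- A cd-structure is a collection of commutative squares closed under isomorphism. -/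
def IsCdStructure (P : Set (CDSquare C)) : Prop :=
  ∀ Q ∈ P, ∀ Q' : CDSquare C, CDSquare.Iso Q' Q → Q' ∈ P

/-- The sieve generated by the two morphisms `p : Y ⟶ X` and `e : A ⟶ X` of a square. -/
def CDSquare.sieve (Q : CDSquare C) : Sieve Q.X where
  arrows Z g := (∃ h : Z ⟶ Q.Y, g = h ≫ Q.p) ∨ (∃ h : Z ⟶ Q.A, g = h ≫ Q.e)
  downward_closed := by
    rintro Z W g (⟨h, rfl⟩ | ⟨h, rfl⟩) f
    · exact Or.inl ⟨f ≫ h, (Category.assoc _ _ _).symm⟩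
    · exact Or.inr ⟨f ≫ h, (Category.assoc _ _ _).symm⟩

variable [HasInitial C]

/-- The topology associated with a cd-structure: the smallest Grothendieck topology
for which the empty sieve covers the initial object and the sieve generated by the two
sides of any distinguished square is a covering sieve. -/
def cdTopology (P : Set (CDSquare C)) : GrothendieckTopology C :=
  sInf {J | (⊥ : Sieve (⊥_ C)) ∈ J (⊥_ C) ∧ ∀ Q ∈ P, Q.sieve ∈ J Q.X}

/-- Simple coverings: the smallest class of families of morphisms containing the
isomorphisms and closed under composition with distinguished squares. -/
inductive IsSimpleCovering (P : Set (CDSquare C)) : ∀ {X : C}, Presieve X → Prop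
  | of_iso {X Y : C} (f : Y ⟶ X) (hf : IsIso f) : IsSimpleCovering P (Presieve.singleton f)
  | of_square (Q : CDSquare C) (hQ : Q ∈ P) (Sy : Presieve Q.Y) (Sa : Presieve Q.A)
      (hy : IsSimpleCovering P Sy) (ha : IsSimpleCovering P Sa) :
      IsSimpleCovering P (fun Z g =>
        (∃ (h : Z ⟶ Q.Y), Sy h ∧ g = h ≫ Q.p) ∨ (∃ (h : Z ⟶ Q.A), Sa h ∧ g = h ≫ Q.e))

/-- A cd-structure is complete if any covering sieve of an object not isomorphic to the
initial object contains a sieve generated by a simple covering. -/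
def IsCompleteCd (P : Set (CDSquare C)) : Prop :=
  ∀ (X : C) (S : Sieve X), ¬ Nonempty (X ≅ ⊥_ C) → S ∈ cdTopology P X →
    ∃ T : Presieve X, IsSimpleCovering P T ∧ Sieve.generate T ≤ S

set_option linter.unusedSectionVars false

variable {P P₁ P₂ : Set (CDSquare C)}

def ContainsSimpleCovering (P : Set (CDSquare C)) {X : C} (S : Sieve X) : Prop :=
  ∃ T : Presieve X, IsSimpleCovering P T ∧ Sieve.generate T ≤ S

def IsNondegenerate (P : Set (CDSquare C)) : Prop :=
  ∀ Q ∈ P, ¬ Nonempty (Q.X ≅ ⊥_ C) → ¬ Nonempty (Q.Y ≅ ⊥_ C) ∨ ¬ Nonempty (Q.A ≅ ⊥_ C)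

def HasSimplePullbacks (P : Set (CDSquare C)) : Prop :=
  ∀ Q ∈ P, ∀ ⦃Y : C⦄ (f : Y ⟶ Q.X), ¬ Nonempty (Y ≅ ⊥_ C) →
    ContainsSimpleCovering P (Q.sieve.pullback f)

namespace IsSimpleCovering

lemma exists_mem {X : C} {T : Presieve X} (hT : IsSimpleCovering P T) :
    ∃ (Z : C) (g : Z ⟶ X), T g := by
  induction hT with
  | of_iso f => exact ⟨_, f, Presieve.singleton.mk⟩
  | of_square Q _ _ _ _ _ ihy =>
    obtain ⟨Z, g, hg⟩ := ihy
    exact ⟨Z, g ≫ Q.p, Or.inl ⟨g, hg, rfl⟩⟩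

lemma mono {P' : Set (CDSquare C)} (hPP' : P ⊆ P') {X : C} {T : Presieve X}
    (hT : IsSimpleCovering P T) : IsSimpleCovering P' T := by
  induction hT with
  | of_iso f hf => exact .of_iso f hf
  | of_square Q hQ Sy Sa _ _ ihy iha => exact .of_square Q (hPP' hQ) Sy Sa ihy iha

lemma exists_mem_not_iso_initial (hP : IsNondegenerate P) {X : C} {T : Presieve X}
    (hT : IsSimpleCovering P T) (hX : ¬ Nonempty (X ≅ ⊥_ C)) :
    ∃ (Z : C) (g : Z ⟶ X), T g ∧ ¬ Nonempty (Z ≅ ⊥_ C) := by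
  induction hT with
  | of_iso f hf =>
    have := hf
    exact ⟨_, f, Presieve.singleton.mk, fun ⟨e⟩ => hX ⟨(asIso f).symm ≪≫ e⟩⟩
  | of_square Q hQ _ _ _ _ ihy iha =>
    rcases hP Q hQ hX with hY | hA
    · obtain ⟨Z, g, hg, hZ⟩ := ihy hY
      exact ⟨Z, g ≫ Q.p, Or.inl ⟨g, hg, rfl⟩, hZ⟩
    · obtain ⟨Z, g, hg, hZ⟩ := iha hA
      exact ⟨Z, g ≫ Q.e, Or.inr ⟨g, hg, rfl⟩, hZ⟩

def _root_.CDSquare.compIso (Q : CDSquare C) {X' : C} (σ : Q.X ≅ X') : CDSquare C :=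
  ⟨Q.B, Q.Y, Q.A, X', Q.top, Q.left, Q.p ≫ σ.hom, Q.e ≫ σ.hom, by rw [reassoc_of% Q.comm]⟩

lemma pushforward_iso (hP : IsCdStructure P) {X X' : C} {T : Presieve X}
    (hT : IsSimpleCovering P T) (σ : X ≅ X') : IsSimpleCovering P (T.pushforward σ.hom) := by
  cases hT with
  | of_iso f hf =>
    rw [Presieve.pushforward_singleton]
    exact .of_iso _ inferInstance
  | of_square Q hQ Sy Sa hy ha =>
    have hQ' : Q.compIso σ ∈ P := by
      refine hP Q hQ _ ⟨⟨𝟙 _, 𝟙 _, 𝟙 _, σ.inv, ?_, ?_, ?_, ?_⟩, ?_, ?_, ?_, ?_⟩ <;>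
        simp [CDSquare.compIso] <;> infer_instance
    convert IsSimpleCovering.of_square _ hQ' Sy Sa hy ha using 1
    · rfl
    refine heq_of_eq (funext fun Z => funext fun g => propext ⟨?_, ?_⟩)
    · rintro ⟨h, rfl, (⟨k, hk, rfl⟩ | ⟨k, hk, rfl⟩)⟩
      exacts [Or.inl ⟨k, hk, Category.assoc _ _ _⟩, Or.inr ⟨k, hk, Category.assoc _ _ _⟩]
    · rintro (⟨k, hk, rfl⟩ | ⟨k, hk, rfl⟩)
      exacts [⟨k ≫ Q.p, Category.assoc _ _ _, Or.inl ⟨k, hk, rfl⟩⟩,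
        ⟨k ≫ Q.e, Category.assoc _ _ _, Or.inr ⟨k, hk, rfl⟩⟩]

lemma containsSimpleCovering_of_forall_pullback (hP : IsCdStructure P) {X : C} {T : Presieve X}
    (hT : IsSimpleCovering P T) (R : Sieve X)
    (hR : ∀ ⦃Z : C⦄ (g : Z ⟶ X), T g → ContainsSimpleCovering P (R.pullback g)) :
    ContainsSimpleCovering P R := by
  induction hT with
  | of_iso f hf =>
    have := hf
    obtain ⟨Tf, hTf, hle⟩ := hR f Presieve.singleton.mk
    refine ⟨_, hTf.pushforward_iso hP (asIso f), ?_⟩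
    rw [Sieve.generate_le_iff]
    rintro Z g ⟨h, rfl, hh⟩
    exact hle _ (Sieve.le_generate Tf _ _ hh)
  | of_square Q hQ Sy Sa _ _ ihy iha =>
    obtain ⟨Ty, hTy, hley⟩ := ihy (R.pullback Q.p) fun Z h hh => by
      simpa only [Sieve.pullback_comp] using hR (h ≫ Q.p) (Or.inl ⟨h, hh, rfl⟩)
    obtain ⟨Ta, hTa, hlea⟩ := iha (R.pullback Q.e) fun Z h hh => by
      simpa only [Sieve.pullback_comp] using hR (h ≫ Q.e) (Or.inr ⟨h, hh, rfl⟩)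
    refine ⟨_, .of_square Q hQ Ty Ta hTy hTa, ?_⟩
    rw [Sieve.generate_le_iff]
    rintro Z g (⟨h, hh, rfl⟩ | ⟨h, hh, rfl⟩)
    · exact hley _ (Sieve.le_generate Ty _ _ hh)
    · exact hlea _ (Sieve.le_generate Ta _ _ hh)

end IsSimpleCovering

namespace ContainsSimpleCovering

lemma mono {P' : Set (CDSquare C)} (hPP' : P ⊆ P') {X : C} {S : Sieve X}
    (hS : ContainsSimpleCovering P S) : ContainsSimpleCovering P' S :=
  let ⟨T, hT, hle⟩ := hS
  ⟨T, hT.mono hPP', hle⟩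

lemma top (X : C) : ContainsSimpleCovering P (⊤ : Sieve X) :=
  ⟨_, .of_iso (𝟙 X) inferInstance, le_top⟩

lemma mem_of_iso_initial {X Z : C} {S : Sieve X} (hS : ContainsSimpleCovering P S)
    (hZ : Nonempty (Z ≅ ⊥_ C)) (h : Z ⟶ X) : S h := by
  obtain ⟨T, hT, hle⟩ := hS
  obtain ⟨W, g, hg⟩ := hT.exists_mem
  obtain ⟨e⟩ := hZ
  have : h = (e.hom ≫ initial.to W) ≫ g := (initialIsInitial.ofIso e.symm).hom_ext _ _
  exact this ▸ S.downward_closed (hle _ (Sieve.le_generate T _ _ hg)) _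

end ContainsSimpleCovering

lemma IsCdStructure.union (hP₁ : IsCdStructure P₁) (hP₂ : IsCdStructure P₂) :
    IsCdStructure (P₁ ∪ P₂) := by
  rintro Q (hQ | hQ) Q' hiso
  · exact Or.inl (hP₁ Q hQ Q' hiso)
  · exact Or.inr (hP₂ Q hQ Q' hiso)

lemma IsNondegenerate.union (h₁ : IsNondegenerate P₁) (h₂ : IsNondegenerate P₂) :
    IsNondegenerate (P₁ ∪ P₂) := by
  rintro Q (hQ | hQ)
  exacts [h₁ Q hQ, h₂ Q hQ]

lemma HasSimplePullbacks.union (h₁ : HasSimplePullbacks P₁) (h₂ : HasSimplePullbacks P₂) :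
    HasSimplePullbacks (P₁ ∪ P₂) := by
  rintro Q (hQ | hQ) Y f hY
  exacts [(h₁ Q hQ f hY).mono Set.subset_union_left, (h₂ Q hQ f hY).mono Set.subset_union_right]

lemma ContainsSimpleCovering.trans (hP : IsCdStructure P) (hnd : IsNondegenerate P) {X : C}
    (hX : ¬ Nonempty (X ≅ ⊥_ C)) {S R : Sieve X} (hS : ContainsSimpleCovering P S)
    (hR : ∀ ⦃Z : C⦄ (g : Z ⟶ X), S g → ¬ Nonempty (Z ≅ ⊥_ C) →
      ContainsSimpleCovering P (R.pullback g)) :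
    ContainsSimpleCovering P R := by
  obtain ⟨T, hT, hle⟩ := hS
  have hTS : ∀ ⦃Z : C⦄ (g : Z ⟶ X), T g → S g := fun _ _ hg => hle _ (Sieve.le_generate T _ _ hg)
  -- `hR` says nothing about the members of `T` with initial domain; they lie in `R` because
  -- `R.pullback g₀` contains a simple covering, hence every map from an initial object.
  obtain ⟨Z₀, g₀, hg₀, hZ₀⟩ := hT.exists_mem_not_iso_initial hnd hX
  have hR_initial : ∀ ⦃Z : C⦄ (g : Z ⟶ X), Nonempty (Z ≅ ⊥_ C) → R g := by
    intro Z g hZ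
    obtain ⟨e⟩ := hZ
    have hg : g = (e.hom ≫ initial.to Z₀) ≫ g₀ := (initialIsInitial.ofIso e.symm).hom_ext _ _
    exact hg ▸ (hR g₀ (hTS g₀ hg₀) hZ₀).mem_of_iso_initial ⟨e⟩ _
  refine hT.containsSimpleCovering_of_forall_pullback hP R fun Z g hg => ?_
  by_cases hZ : Nonempty (Z ≅ ⊥_ C)
  · rw [R.pullback_eq_top_of_mem (hR_initial g hZ)]
    exact .top Z
  · exact hR g (hTS g hg) hZ

/-- Asking for simple coverings only after pullback to non-initial objects makes the empty sieve
on an initial object covering and pullback stability automatic. -/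
def simpleTopology (P : Set (CDSquare C)) (hP : IsCdStructure P) (hnd : IsNondegenerate P) :
    GrothendieckTopology C where
  sieves X := {S | ∀ ⦃Y : C⦄ (f : Y ⟶ X), ¬ Nonempty (Y ≅ ⊥_ C) →
    ContainsSimpleCovering P (S.pullback f)}
  top_mem' X Y f _ := by
    rw [Sieve.pullback_top]
    exact .top Y
  pullback_stable' X Y S f hS Z g hZ := by
    rw [← Sieve.pullback_comp]
    exact hS _ hZ
  transitive' X S hS R hR Y f hY := (hS f hY).trans hP hnd hY fun Z g hg hZ => by
    simpa only [← Sieve.pullback_comp, Category.id_comp] using hR hg (𝟙 Z) hZ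

theorem isCompleteCd_of_hasSimplePullbacks [HasStrictInitialObjects C] (hP : IsCdStructure P)
    (hpb : HasSimplePullbacks P) (hnd : IsNondegenerate P) : IsCompleteCd P := by
  have hle : cdTopology P ≤ simpleTopology P hP hnd :=
    sInf_le ⟨fun Y f hY => (hY ⟨asIso f⟩).elim, fun Q hQ => hpb Q hQ⟩
  intro X S hX hS
  have h := hle X hS (𝟙 X) hX
  rwa [Sieve.pullback_id] at h

lemma bot_mem_cdTopology_of_iso_initial {X : C} (hX : Nonempty (X ≅ ⊥_ C)) :
    (⊥ : Sieve X) ∈ cdTopology P X := by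
  obtain ⟨e⟩ := hX
  simpa only [Sieve.pullback_bot] using (cdTopology P).pullback_stable e.hom
    ((GrothendieckTopology.mem_sInf _ _).2 fun _ hJ => hJ.1)

lemma CDSquare.sieve_mem_cdTopology {Q : CDSquare C} (hQ : Q ∈ P) :
    Q.sieve ∈ cdTopology P Q.X :=
  (GrothendieckTopology.mem_sInf _ _).2 fun _ hJ => hJ.2 Q hQ

namespace IsCompleteCd

lemma iso_initial_of_bot_mem (hP : IsCompleteCd P) {X : C}
    (hb : (⊥ : Sieve X) ∈ cdTopology P X) : Nonempty (X ≅ ⊥_ C) := by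
  by_contra hX
  obtain ⟨T, hT, hle⟩ := hP X ⊥ hX hb
  obtain ⟨Z, g, hg⟩ := hT.exists_mem
  exact hle _ (Sieve.le_generate T _ _ hg)

lemma iso_initial_of_hom (hP : IsCompleteCd P) {W Z : C} (f : W ⟶ Z)
    (hZ : Nonempty (Z ≅ ⊥_ C)) : Nonempty (W ≅ ⊥_ C) :=
  hP.iso_initial_of_bot_mem <| by
    simpa only [Sieve.pullback_bot] using
      (cdTopology P).pullback_stable f (bot_mem_cdTopology_of_iso_initial hZ)

lemma hasStrictInitialObjects (hP : IsCompleteCd P) : HasStrictInitialObjects C :=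
  hasStrictInitialObjects_of_initial_is_strict fun A f => by
    obtain ⟨e⟩ := hP.iso_initial_of_hom f ⟨Iso.refl _⟩
    rw [(initialIsInitial.ofIso e.symm).hom_ext f e.hom]
    infer_instance

lemma isNondegenerate (hP : IsCompleteCd P) : IsNondegenerate P := by
  intro _ hQ hX
  by_contra! ⟨hY, hA⟩
  refine hX (hP.iso_initial_of_bot_mem
    ((cdTopology P).transitive (CDSquare.sieve_mem_cdTopology hQ) _ ?_))
  rintro Z g (⟨h, rfl⟩ | ⟨h, rfl⟩) <;> rw [Sieve.pullback_bot]
  exacts [bot_mem_cdTopology_of_iso_initial (hP.iso_initial_of_hom h hY),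
    bot_mem_cdTopology_of_iso_initial (hP.iso_initial_of_hom h hA)]

lemma hasSimplePullbacks (hP : IsCompleteCd P) : HasSimplePullbacks P := fun _ hQ Y f hY =>
  hP Y _ hY ((cdTopology P).pullback_stable f (CDSquare.sieve_mem_cdTopology hQ))

end IsCompleteCd

theorem statement2 (P₁ P₂ : Set (CDSquare C)) (hP₁ : IsCdStructure P₁) (hP₂ : IsCdStructure P₂)
    (h₁ : IsCompleteCd P₁) (h₂ : IsCompleteCd P₂) :
    IsCdStructure (P₁ ∪ P₂) ∧ IsCompleteCd (P₁ ∪ P₂) := by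
  have := h₁.hasStrictInitialObjects
  have hP := hP₁.union hP₂
  exact ⟨hP, isCompleteCd_of_hasSimplePullbacks hP
    (h₁.hasSimplePullbacks.union h₂.hasSimplePullbacks)
    (h₁.isNondegenerate.union h₂.isNondegenerate)⟩
end

section
/- Let C be a chunky category. Then the additive cd-structure P_add, consisting of all squares of the form ∅ → X, ∅ → Y, X → X ⊔ Y, Y → X ⊔ Y, is complete, regular, and bounded. -/
open CategoryTheory CategoryTheory.Limits Opposite

universe v u
variable {C : Type u} [Category.{v} C]

variable [HasInitial C]

/-- A density structure on a category with an initial object. -/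
structure DensityStructure (C : Type u) [Category.{v} C] [HasInitial C] where
  D : ℕ → ∀ X : C, Set ((U : C) × (U ⟶ X))
  init_mem : ∀ X : C, ⟨⊥_ C, initial.to X⟩ ∈ D 0 X
  iso_mem : ∀ (n : ℕ) (X U : C) (f : U ⟶ X), IsIso f → ⟨U, f⟩ ∈ D n X
  antitone : ∀ (n : ℕ) (X : C), D (n + 1) X ⊆ D n X
  comp_mem : ∀ (n : ℕ) (X U V : C) (j : U ⟶ V) (j' : V ⟶ X),
    ⟨U, j⟩ ∈ D n V → ⟨V, j'⟩ ∈ D n X → ⟨U, j ≫ j'⟩ ∈ D n X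

/-- `X` has dimension `≤ n` with respect to a density structure. -/
def DensityStructure.DimLE {C : Type u} [Category.{v} C] [HasInitial C]
    (DS : DensityStructure C) (X : C) (n : ℕ) : Prop :=
  ∀ (U : C) (f : U ⟶ X), ⟨U, f⟩ ∈ DS.D (n + 1) X → IsIso f

/-- A density structure is locally of finite dimension. -/
def DensityStructure.LocallyFiniteDim {C : Type u} [Category.{v} C] [HasInitial C]
    (DS : DensityStructure C) : Prop :=
  ∀ X : C, ∃ n, DS.DimLE X n


/-- A distinguished square is reducing with respect to a density structure. -/
def IsReducingSquare (P : Set (CDSquare C)) (DS : DensityStructure C) (Q : CDSquare C) : Prop :=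
  ∀ (i : ℕ) (B₀ : (U : C) × (U ⟶ Q.B)) (A₀ : (U : C) × (U ⟶ Q.A))
    (Y₀ : (U : C) × (U ⟶ Q.Y)),
    B₀ ∈ DS.D i Q.B → A₀ ∈ DS.D (i + 1) Q.A → Y₀ ∈ DS.D (i + 1) Q.Y →
    ∃ X' ∈ DS.D (i + 1) Q.X, ∃ Q' ∈ P, ∃ φ : CDSquareHom Q' Q, ∃ iX : Q'.X ≅ X'.1,
      φ.hX = iX.hom ≫ X'.2 ∧
      (∃ b : Q'.B ⟶ B₀.1, φ.hB = b ≫ B₀.2) ∧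
      (∃ a : Q'.A ⟶ A₀.1, φ.hA = a ≫ A₀.2) ∧
      (∃ y : Q'.Y ⟶ Y₀.1, φ.hY = y ≫ Y₀.2)

/-- `Q'` is a refinement of `Q`: a morphism of squares which is the identity on the lower
right corner. -/
def IsRefinement (Q' Q : CDSquare C) : Prop :=
  ∃ φ : CDSquareHom Q' Q, ∃ h : Q'.X = Q.X, φ.hX = eqToHom h

/-- A density structure is reducing for a cd-structure if every distinguished square has a
reducing refinement. -/
def IsReducingDensity (P : Set (CDSquare C)) (DS : DensityStructure C) : Prop :=
  ∀ Q ∈ P, ∃ Q' ∈ P, IsRefinement Q' Q ∧ IsReducingSquare P DS Q'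

/-- A cd-structure is bounded if it admits a reducing density structure which is locally of
finite dimension. -/
def IsBoundedCd (P : Set (CDSquare C)) : Prop :=
  ∃ DS : DensityStructure C, IsReducingDensity P DS ∧ DS.LocallyFiniteDim

variable {E : Type u} [SmallCategory E] [HasInitial E] [HasFiniteCoproducts E]

/-- A small category with initial object and finite coproducts is chunky. -/
def IsChunky (E : Type u) [SmallCategory E] [HasInitial E] [HasFiniteCoproducts E] : Prop :=
  (∀ (Z : E) (f : Z ⟶ ⊥_ E), IsIso f) ∧
  (∀ X Y : E, IsPullback (initial.to X) (initial.to Y)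
    (coprod.inl : X ⟶ X ⨿ Y) (coprod.inr : Y ⟶ X ⨿ Y)) ∧
  (∀ (X Y Z : E) (f : Z ⟶ X ⨿ Y),
    ∃ (Zx Zy : E) (px : Zx ⟶ Z) (qx : Zx ⟶ X) (py : Zy ⟶ Z) (qy : Zy ⟶ Y),
      IsPullback px qx f coprod.inl ∧ IsPullback py qy f coprod.inr ∧
      Nonempty (IsColimit (BinaryCofan.mk px py)))

/-- The canonical coproduct square `∅, X, Y, X ⊔ Y`. -/
noncomputable def coprodSquare (X Y : E) : CDSquare E where
  B := ⊥_ E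
  Y := X
  A := Y
  X := X ⨿ Y
  top := initial.to X
  left := initial.to Y
  p := coprod.inl
  e := coprod.inr
  comm := Subsingleton.elim _ _

/-- The additive cd-structure: all squares isomorphic to a coproduct square. -/
def addCd (E : Type u) [SmallCategory E] [HasInitial E] [HasFiniteCoproducts E] :
    Set (CDSquare E) :=
  {Q | ∃ X Y : E, CDSquare.Iso Q (coprodSquare X Y)}

/-- `ρ(U)`: the `t_P`-sheaf associated with the presheaf represented by `U`. -/
noncomputable def cdRho (P : Set (CDSquare E)) : E ⥤ Sheaf (cdTopology P) (Type u) :=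
  yoneda ⋙ presheafToSheaf (cdTopology P) (Type u)

instance cdSheafHasColimitPair (P : Set (CDSquare E)) (X Y : Sheaf (cdTopology P) (Type u)) :
    HasColimit (pair X Y) :=
  (Sheaf.instHasColimitsOfShape : HasColimitsOfShape (Discrete WalkingPair) _).has_colimit _

/-- For a distinguished square `Q`, the canonical morphism
`ρ(Y) ⨿ (ρ(B) ×_{ρ(A)} ρ(B)) ⟶ ρ(Y) ×_{ρ(X)} ρ(Y)` whose components are the diagonal and
the square of the morphism `ρ(B) ⟶ ρ(Y)`. -/
noncomputable def cdRegComparison (P : Set (CDSquare E)) (Q : CDSquare E) :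
    ((cdRho P).obj Q.Y) ⨿ (pullback ((cdRho P).map Q.left) ((cdRho P).map Q.left)) ⟶
      pullback ((cdRho P).map Q.p) ((cdRho P).map Q.p) :=
  coprod.desc (pullback.lift (𝟙 _) (𝟙 _) rfl)
    (pullback.lift (pullback.fst _ _ ≫ (cdRho P).map Q.top)
      (pullback.snd _ _ ≫ (cdRho P).map Q.top)
      (by
        have h : (cdRho P).map Q.top ≫ (cdRho P).map Q.p
            = (cdRho P).map Q.left ≫ (cdRho P).map Q.e := by
          rw [← Functor.map_comp, ← Functor.map_comp, Q.comm]
        rw [Category.assoc, Category.assoc, h, ← Category.assoc, ← Category.assoc,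
          pullback.condition]))

/-- A cd-structure is regular if every distinguished square is a pullback square, `e` is a
monomorphism and the canonical comparison morphism of sheaves is an epimorphism. -/
def IsRegularCd (P : Set (CDSquare E)) : Prop :=
  ∀ Q ∈ P, IsPullback Q.top Q.left Q.p Q.e ∧ Mono Q.e ∧ Epi (cdRegComparison P Q)

/-!
A distinguished square of `addCd E` is, up to isomorphism, a coproduct square `∅, Y, A, Y ⨿ A`
(`mem_addCd_iff`); in particular its corner `B` is initial.

Completeness: the sieves which either live on an initial object or contain a simple covering
form a Grothendieck topology, hence one containing the cd-topology. Stability under pullback is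
where chunkiness enters: pulling a coproduct decomposition of `X` back along `Z ⟶ X` gives a
coproduct decomposition of `Z`, so simple coverings pull back to simple coverings. Transitivity
is an induction over simple coverings, a degenerate square with an initial summand being
absorbed by an isomorphism.

Regularity comes down to coprojections being monomorphisms, which again follows from
decomposing along a coprojection.

Boundedness: since `B` is initial, every distinguished square is reducing for the density
structure with `D₀` everything and `Dₙ` the isomorphisms, which has dimension `0`.
-/

section

variable {C : Type u} [Category.{v} C]

def CDSquareHom.comp {Q'' Q' Q : CDSquare C} (ψ : CDSquareHom Q'' Q') (φ : CDSquareHom Q' Q) :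
    CDSquareHom Q'' Q where
  hB := ψ.hB ≫ φ.hB
  hY := ψ.hY ≫ φ.hY
  hA := ψ.hA ≫ φ.hA
  hX := ψ.hX ≫ φ.hX
  commTop := by rw [reassoc_of% ψ.commTop, φ.commTop, Category.assoc]
  commLeft := by rw [reassoc_of% ψ.commLeft, φ.commLeft, Category.assoc]
  commP := by rw [reassoc_of% ψ.commP, φ.commP, Category.assoc]
  commE := by rw [reassoc_of% ψ.commE, φ.commE, Category.assoc]

def CDSquareHom.id (Q : CDSquare C) : CDSquareHom Q Q :=
  ⟨𝟙 _, 𝟙 _, 𝟙 _, 𝟙 _, by simp, by simp, by simp, by simp⟩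

theorem IsRefinement.refl (Q : CDSquare C) : IsRefinement Q Q :=
  ⟨CDSquareHom.id Q, rfl, rfl⟩

theorem CDSquare.Iso.trans {Q'' Q' Q : CDSquare C} (h₁ : Q''.Iso Q') (h₂ : Q'.Iso Q) :
    Q''.Iso Q := by
  obtain ⟨ψ, _, _, _, _⟩ := h₁
  obtain ⟨φ, _, _, _, _⟩ := h₂
  exact ⟨ψ.comp φ, IsIso.comp_isIso, IsIso.comp_isIso, IsIso.comp_isIso, IsIso.comp_isIso⟩

def CDSquare.postcomp (Q : CDSquare C) {X' : C} (f : Q.X ⟶ X') : CDSquare C :=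
  { Q with X := X', p := Q.p ≫ f, e := Q.e ≫ f, comm := by rw [reassoc_of% Q.comm] }

theorem CDSquare.postcomp_iso (Q : CDSquare C) {X' : C} (f : Q.X ⟶ X') [IsIso f] :
    (Q.postcomp f).Iso Q :=
  ⟨⟨𝟙 _, 𝟙 _, 𝟙 _, (inv f : X' ⟶ Q.X), by simp [postcomp], by simp [postcomp],
    by simp [postcomp], by simp [postcomp]⟩,
    IsIso.id _, IsIso.id _, IsIso.id _, IsIso.inv_isIso (f := f)⟩

def IsSimplyCovered (P : Set (CDSquare C)) {X : C} (S : Sieve X) : Prop :=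
  ∃ T : Presieve X, IsSimpleCovering P T ∧ Sieve.generate T ≤ S

namespace IsSimplyCovered

variable {P : Set (CDSquare C)} {X : C} {S S' : Sieve X}

theorem mono (h : S ≤ S') (hS : IsSimplyCovered P S) : IsSimplyCovered P S' :=
  let ⟨T, hT, hle⟩ := hS
  ⟨T, hT, hle.trans h⟩

theorem top (X : C) : IsSimplyCovered P (⊤ : Sieve X) :=
  ⟨_, .of_iso (𝟙 X) inferInstance, le_top⟩

theorem of_square {Q : CDSquare C} (hQ : Q ∈ P) {S : Sieve Q.X}
    (hY : IsSimplyCovered P (S.pullback Q.p)) (hA : IsSimplyCovered P (S.pullback Q.e)) :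
    IsSimplyCovered P S := by
  obtain ⟨Ty, hTy, hley⟩ := hY
  obtain ⟨Ta, hTa, hlea⟩ := hA
  refine ⟨_, .of_square Q hQ Ty Ta hTy hTa, (Sieve.generate_le_iff _ _).mpr ?_⟩
  rintro Z g (⟨h, hh, rfl⟩ | ⟨h, hh, rfl⟩)
  · exact hley _ (Sieve.le_generate Ty _ _ hh)
  · exact hlea _ (Sieve.le_generate Ta _ _ hh)

theorem sieve {Q : CDSquare C} (hQ : Q ∈ P) : IsSimplyCovered P Q.sieve := by
  refine of_square hQ ?_ ?_
  · rw [Sieve.pullback_eq_top_of_mem _ (Or.inl ⟨𝟙 _, (Category.id_comp _).symm⟩)]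
    exact top _
  · rw [Sieve.pullback_eq_top_of_mem _ (Or.inr ⟨𝟙 _, (Category.id_comp _).symm⟩)]
    exact top _

theorem of_pullback_isIso (hP : IsCdStructure P) {Y : C} (f : Y ⟶ X) [IsIso f]
    (h : IsSimplyCovered P (S.pullback f)) : IsSimplyCovered P S := by
  obtain ⟨T, hT, hle⟩ := h
  rw [Sieve.generate_le_iff] at hle
  cases hT with
  | of_iso k hk =>
    refine ⟨_, .of_iso (k ≫ f) inferInstance, (Sieve.generate_le_iff _ _).mpr ?_⟩
    rintro _ _ ⟨⟩
    exact hle _ _ (Presieve.singleton_self k)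
  | of_square Q hQ Sy Sa hy ha =>
    refine ⟨_, .of_square (Q.postcomp f) (hP Q hQ _ (Q.postcomp_iso f)) Sy Sa hy ha,
      (Sieve.generate_le_iff _ _).mpr ?_⟩
    rintro Z g (⟨h, hh, rfl⟩ | ⟨h, hh, rfl⟩)
    · have := hle _ _ (Or.inl ⟨h, hh, rfl⟩)
      exact (Category.assoc h _ f) ▸ this
    · have := hle _ _ (Or.inr ⟨h, hh, rfl⟩)
      exact (Category.assoc h _ f) ▸ this

end IsSimplyCovered

section

variable [HasBinaryCoproducts C]

/-- `Q` is, up to isomorphism, the square `∅, Y, A, Y ⨿ A`. -/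
def CDSquare.IsCoprod (Q : CDSquare C) : Prop :=
  Nonempty (IsInitial Q.B) ∧
    ∃ i : Q.X ≅ Q.Y ⨿ Q.A, Q.p ≫ i.hom = coprod.inl ∧ Q.e ≫ i.hom = coprod.inr

theorem CDSquare.IsCoprod.of_iso {Q' Q : CDSquare C} (hQ : Q.IsCoprod) (h : Q'.Iso Q) :
    Q'.IsCoprod := by
  obtain ⟨⟨hB⟩, i, hp, he⟩ := hQ
  obtain ⟨φ, _, _, _, _⟩ := h
  refine ⟨⟨hB.ofIso (asIso φ.hB).symm⟩,
    asIso φ.hX ≪≫ i ≪≫ coprod.mapIso (asIso φ.hY).symm (asIso φ.hA).symm, ?_, ?_⟩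
  · simp [reassoc_of% φ.commP, reassoc_of% hp]
  · simp [reassoc_of% φ.commE, reassoc_of% he]

end

end

noncomputable def cofanSquare {X Y A : C} (p : Y ⟶ X) (e : A ⟶ X) : CDSquare C :=
  ⟨⊥_ C, Y, A, X, initial.to Y, initial.to A, p, e, initial.hom_ext _ _⟩

def IsInitialOrSimplyCovered (P : Set (CDSquare C)) {X : C} (S : Sieve X) : Prop :=
  Nonempty (X ≅ ⊥_ C) ∨ IsSimplyCovered P S

theorem IsInitialOrSimplyCovered.of_pullback_isIso {P : Set (CDSquare C)}
    (hP : IsCdStructure P) {X Y : C} {S : Sieve X} (f : Y ⟶ X) [IsIso f]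
    (h : IsInitialOrSimplyCovered P (S.pullback f)) : IsInitialOrSimplyCovered P S :=
  h.imp (fun ⟨i⟩ => ⟨(asIso f).symm ≪≫ i⟩) (IsSimplyCovered.of_pullback_isIso hP f)

def trivialDensity : DensityStructure C where
  D
    | 0, _ => Set.univ
    | _ + 1, _ => {f | IsIso f.2}
  init_mem _ := trivial
  iso_mem
    | 0, _, _, _, _ => trivial
    | _ + 1, _, _, _, hf => hf
  antitone
    | 0, _ => fun _ _ => trivial
    | _ + 1, _ => fun _ hf => hf
  comp_mem
    | 0, _, _, _, _, _, _, _ => trivial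
    | _ + 1, _, _, _, _, _, (_ : IsIso _), (_ : IsIso _) => IsIso.comp_isIso

theorem trivialDensity_locallyFiniteDim : (trivialDensity : DensityStructure C).LocallyFiniteDim :=
  fun _ => ⟨0, fun _ _ hf => hf⟩

theorem isReducingSquare_trivialDensity {P : Set (CDSquare C)} {Q : CDSquare C} (hQ : Q ∈ P)
    (hB : IsInitial Q.B) : IsReducingSquare P trivialDensity Q := by
  intro _ B₀ A₀ Y₀ _ (_ : IsIso A₀.2) (_ : IsIso Y₀.2)
  exact ⟨⟨Q.X, 𝟙 Q.X⟩, IsIso.id _, Q, hQ, CDSquareHom.id Q, Iso.refl _,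
    by simp [CDSquareHom.id], ⟨hB.to _, hB.hom_ext _ _⟩,
    ⟨inv A₀.2, by simp [CDSquareHom.id]⟩, ⟨inv Y₀.2, by simp [CDSquareHom.id]⟩⟩

theorem isBoundedCd_of_isInitial {P : Set (CDSquare C)}
    (hP : ∀ Q ∈ P, Nonempty (IsInitial Q.B)) : IsBoundedCd P :=
  ⟨trivialDensity,
    fun Q hQ => ⟨Q, hQ, .refl Q, isReducingSquare_trivialDensity hQ (hP Q hQ).some⟩,
    trivialDensity_locallyFiniteDim⟩

theorem addCd_isCdStructure : IsCdStructure (addCd E) :=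
  fun _ ⟨X, Y, h⟩ _ h' => ⟨X, Y, h'.trans h⟩

theorem mem_addCd_iff {Q : CDSquare E} : Q ∈ addCd E ↔ Q.IsCoprod := by
  constructor
  · rintro ⟨X, Y, h⟩
    exact CDSquare.IsCoprod.of_iso
      ⟨⟨initialIsInitial⟩, Iso.refl _, Category.comp_id _, Category.comp_id _⟩ h
  · rintro ⟨⟨hB⟩, i, hp, he⟩
    exact ⟨Q.Y, Q.A, ⟨(hB.uniqueUpToIso initialIsInitial).hom, 𝟙 _, 𝟙 _, i.hom,
      hB.hom_ext _ _, hB.hom_ext _ _, by simpa [coprodSquare] using hp,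
      by simpa [coprodSquare] using he⟩,
      Iso.isIso_hom _, IsIso.id _, IsIso.id _, Iso.isIso_hom _⟩

theorem cofanSquare_mem_addCd {X Y A : E} {p : Y ⟶ X} {e : A ⟶ X}
    (hc : IsColimit (BinaryCofan.mk p e)) : cofanSquare p e ∈ addCd E :=
  mem_addCd_iff.mpr ⟨⟨initialIsInitial⟩, hc.coconePointUniqueUpToIso (colimit.isColimit _),
    hc.comp_coconePointUniqueUpToIso_hom _ ⟨.left⟩,
    hc.comp_coconePointUniqueUpToIso_hom _ ⟨.right⟩⟩

theorem isIso_p_of_mem_addCd {Q : CDSquare E} (hQ : Q ∈ addCd E) (hA : IsInitial Q.A) :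
    IsIso Q.p := by
  obtain ⟨-, i, hp, -⟩ := mem_addCd_iff.mp hQ
  have : IsIso (coprod.inl : Q.Y ⟶ Q.Y ⨿ Q.A) :=
    (BinaryCofan.isColimit_iff_isIso_inl hA _).mp ⟨colimit.isColimit _⟩
  rw [← Iso.eq_comp_inv] at hp
  rw [hp]
  infer_instance

theorem isIso_e_of_mem_addCd {Q : CDSquare E} (hQ : Q ∈ addCd E) (hY : IsInitial Q.Y) :
    IsIso Q.e := by
  obtain ⟨-, i, -, he⟩ := mem_addCd_iff.mp hQ
  have : IsIso (coprod.inr : Q.A ⟶ Q.Y ⨿ Q.A) :=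
    (BinaryCofan.isColimit_iff_isIso_inr hY _).mp ⟨colimit.isColimit _⟩
  rw [← Iso.eq_comp_inv] at he
  rw [he]
  infer_instance

theorem IsInitialOrSimplyCovered.of_mem_addCd {Q : CDSquare E} (hQ : Q ∈ addCd E)
    {R : Sieve Q.X} (hY : IsInitialOrSimplyCovered (addCd E) (R.pullback Q.p))
    (hA : IsInitialOrSimplyCovered (addCd E) (R.pullback Q.e)) :
    IsInitialOrSimplyCovered (addCd E) R := by
  rcases hA with hA | hA
  · have := isIso_p_of_mem_addCd hQ (initialIsInitial.ofIso hA.some.symm)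
    exact .of_pullback_isIso addCd_isCdStructure Q.p hY
  rcases hY with hY | hY
  · have := isIso_e_of_mem_addCd hQ (initialIsInitial.ofIso hY.some.symm)
    exact .of_pullback_isIso addCd_isCdStructure Q.e (Or.inr hA)
  · exact Or.inr (.of_square hQ hY hA)

theorem isInitialOrSimplyCovered_of_isSimpleCovering {X : E} {T : Presieve X}
    (hT : IsSimpleCovering (addCd E) T) {R : Sieve X}
    (hR : ∀ ⦃Z : E⦄ (f : Z ⟶ X), T f →
      IsInitialOrSimplyCovered (addCd E) (R.pullback f)) :
    IsInitialOrSimplyCovered (addCd E) R := by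
  induction hT with
  | of_iso k hk =>
    exact .of_pullback_isIso addCd_isCdStructure k (hR k (Presieve.singleton_self k))
  | of_square Q hQ Sy Sa _ _ ihy iha =>
    refine .of_mem_addCd hQ (ihy fun Z f hf => ?_) (iha fun Z f hf => ?_)
    · rw [← Sieve.pullback_comp]
      exact hR _ (Or.inl ⟨f, hf, rfl⟩)
    · rw [← Sieve.pullback_comp]
      exact hR _ (Or.inr ⟨f, hf, rfl⟩)

theorem isBoundedCd_addCd : IsBoundedCd (addCd E) :=
  isBoundedCd_of_isInitial fun _ hQ => (mem_addCd_iff.mp hQ).1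

/-- `ρ` preserves monomorphisms, so the diagonal of `ρ(p)`, the first component of the
comparison morphism, is already an isomorphism. -/
theorem epi_cdRegComparison {E : Type u} [SmallCategory E] [HasInitial E] (P : Set (CDSquare E))
    (Q : CDSquare E) [Mono Q.p] : Epi (cdRegComparison P Q) := by
  have : Mono ((cdRho P).map Q.p) :=
    (presheafToSheaf (cdTopology P) (Type u)).map_mono (yoneda.map Q.p)
  have h : coprod.inl ≫ cdRegComparison P Q = pullback.diagonal ((cdRho P).map Q.p) :=
    coprod.inl_desc _ _
  have : Epi (coprod.inl ≫ cdRegComparison P Q) := by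
    rw [h]
    infer_instance
  exact epi_of_epi coprod.inl _

namespace IsChunky

/-- Decomposing `X` along `inl`, the part `Zx` over `X` is the kernel pair of `inl`; the part `Zy`
over `Y` maps to `∅`, so the projection `Zx ⟶ X` is an isomorphism. -/
theorem mono_inl (hE : IsChunky E) (X Y : E) : Mono (coprod.inl : X ⟶ X ⨿ Y) := by
  obtain ⟨Zx, Zy, px, qx, py, qy, hx, hy, ⟨hc⟩⟩ := hE.2.2 X Y X coprod.inl
  let l := (hE.2.1 X Y).lift py qy hy.w
  have := hE.1 Zy l
  have : IsIso px :=
    (BinaryCofan.isColimit_iff_isIso_inl (initialIsInitial.ofIso (asIso l).symm) _).mp ⟨hc⟩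
  exact IsKernelPair.mono_of_isIso_fst hx

theorem mono_inr (hE : IsChunky E) (X Y : E) : Mono (coprod.inr : Y ⟶ X ⨿ Y) := by
  have := hE.mono_inl Y X
  have h : (coprod.inl ≫ (coprod.braiding Y X).hom : Y ⟶ X ⨿ Y) = coprod.inr :=
    coprod.inl_desc _ _
  exact h ▸ mono_comp _ _

theorem mono_p_of_mem_addCd (hE : IsChunky E) {Q : CDSquare E} (hQ : Q ∈ addCd E) :
    Mono Q.p := by
  obtain ⟨-, i, hp, -⟩ := mem_addCd_iff.mp hQ
  have := hE.mono_inl Q.Y Q.A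
  rw [← Iso.eq_comp_inv] at hp
  rw [hp]
  exact mono_comp _ _

theorem mono_e_of_mem_addCd (hE : IsChunky E) {Q : CDSquare E} (hQ : Q ∈ addCd E) :
    Mono Q.e := by
  obtain ⟨-, i, -, he⟩ := mem_addCd_iff.mp hQ
  have := hE.mono_inr Q.Y Q.A
  rw [← Iso.eq_comp_inv] at he
  rw [he]
  exact mono_comp _ _

theorem isPullback_of_mem_addCd (hE : IsChunky E) {Q : CDSquare E} (hQ : Q ∈ addCd E) :
    IsPullback Q.top Q.left Q.p Q.e := by
  obtain ⟨⟨hB⟩, i, hp, he⟩ := mem_addCd_iff.mp hQ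
  refine (hE.2.1 Q.Y Q.A).of_iso (initialIsInitial.uniqueUpToIso hB) (Iso.refl _) (Iso.refl _)
    i.symm (initialIsInitial.hom_ext _ _) (initialIsInitial.hom_ext _ _) ?_ ?_
  · simp [← hp]
  · simp [← he]

theorem exists_cofanSquare_over (hE : IsChunky E) {Q : CDSquare E} (hQ : Q ∈ addCd E) {Z : E}
    (f : Z ⟶ Q.X) :
    ∃ (Zy Za : E) (py : Zy ⟶ Z) (pa : Za ⟶ Z) (gy : Zy ⟶ Q.Y) (ga : Za ⟶ Q.A),
      cofanSquare py pa ∈ addCd E ∧ gy ≫ Q.p = py ≫ f ∧ ga ≫ Q.e = pa ≫ f := by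
  obtain ⟨-, i, hp, he⟩ := mem_addCd_iff.mp hQ
  obtain ⟨Zy, Za, py, gy, pa, ga, hy, ha, ⟨hc⟩⟩ := hE.2.2 Q.Y Q.A Z (f ≫ i.hom)
  refine ⟨Zy, Za, py, pa, gy, ga, cofanSquare_mem_addCd hc, ?_, ?_⟩
  · rw [← cancel_mono i.hom]
    simp only [Category.assoc, hp, hy.w]
  · rw [← cancel_mono i.hom]
    simp only [Category.assoc, he, ha.w]

theorem isSimplyCovered_generate_pullback (hE : IsChunky E) {X : E} {T : Presieve X}
    (hT : IsSimpleCovering (addCd E) T) {Z : E} (f : Z ⟶ X) :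
    IsSimplyCovered (addCd E) ((Sieve.generate T).pullback f) := by
  induction hT generalizing Z with
  | of_iso k hk =>
    rw [Sieve.pullback_eq_top_of_mem (Sieve.generate _) (f := f)
      ⟨_, f ≫ inv k, k, Presieve.singleton_self k, by simp⟩]
    exact .top Z
  | of_square Q hQ Sy Sa _ _ ihy iha =>
    obtain ⟨Zy, Za, py, pa, gy, ga, hQ', hy, ha⟩ := hE.exists_cofanSquare_over hQ f
    refine .of_square hQ' ?_ ?_
    · change IsSimplyCovered _ (((Sieve.generate _).pullback f).pullback py)
      rw [← Sieve.pullback_comp, ← hy, Sieve.pullback_comp]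
      refine (ihy gy).mono (Sieve.pullback_monotone gy ((Sieve.generate_le_iff _ _).mpr ?_))
      exact fun _ h hh => Sieve.le_generate _ _ _ (Or.inl ⟨h, hh, rfl⟩)
    · change IsSimplyCovered _ (((Sieve.generate _).pullback f).pullback pa)
      rw [← Sieve.pullback_comp, ← ha, Sieve.pullback_comp]
      refine (iha ga).mono (Sieve.pullback_monotone ga ((Sieve.generate_le_iff _ _).mpr ?_))
      exact fun _ h hh => Sieve.le_generate _ _ _ (Or.inr ⟨h, hh, rfl⟩)

def addTopology (hE : IsChunky E) : GrothendieckTopology E where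
  sieves X := {S | IsInitialOrSimplyCovered (addCd E) S}
  top_mem' X := Or.inr (.top X)
  pullback_stable' X Y S f := by
    rintro (⟨⟨i⟩⟩ | ⟨T, hT, hle⟩)
    · have := hE.1 Y (f ≫ i.hom)
      exact Or.inl ⟨asIso (f ≫ i.hom)⟩
    · exact Or.inr ((hE.isSimplyCovered_generate_pullback hT f).mono
        (Sieve.pullback_monotone f hle))
  transitive' X S hS R hR := by
    rcases hS with hX | ⟨T, hT, hle⟩
    · exact Or.inl hX
    · exact isInitialOrSimplyCovered_of_isSimpleCovering hT
        fun Z f hf => hR (hle _ (Sieve.le_generate T _ _ hf))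

theorem isCompleteCd_addCd (hE : IsChunky E) : IsCompleteCd (addCd E) := by
  intro X S hX hS
  have hle : cdTopology (addCd E) ≤ hE.addTopology :=
    sInf_le ⟨Or.inl ⟨Iso.refl _⟩, fun Q hQ => Or.inr (.sieve hQ)⟩
  exact (GrothendieckTopology.le_def.mp hle X hS).resolve_left hX

theorem isRegularCd_addCd (hE : IsChunky E) : IsRegularCd (addCd E) := fun Q hQ =>
  have := hE.mono_p_of_mem_addCd hQ
  ⟨hE.isPullback_of_mem_addCd hQ, hE.mono_e_of_mem_addCd hQ, epi_cdRegComparison _ Q⟩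

end IsChunky

theorem statement17 (hE : IsChunky E) :
    IsCompleteCd (addCd E) ∧ IsRegularCd (addCd E) ∧ IsBoundedCd (addCd E) :=
  ⟨hE.isCompleteCd_addCd, hE.isRegularCd_addCd, isBoundedCd_addCd⟩
end
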